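/- Let X and Y be real Banach spaces and N an absolute normalized norm on ℝ² that is positively octahedral: there exist a, b ≥ 0 with N(a,b) = 1, N((a,b)+(0,1)) = 2 and N((a,b)+(1,0)) = 2 (hence N((a,b)+(c,d)) = 2 for all c,d ≥ 0 with N(c,d)=1). If x ∈ S_X is a Daugavet point of X and y ∈ S_Y is a Daugavet point of Y, then (a·x, b·y) is a Daugavet point of Z = X ⊕_N Y. -/

import Mathlib

/-!
View `N` as a seminorm `p` on `ℝ²`. If `p x, p y ≤ 1` and `p (x + y) = 2`, then `p` is additive
on the cone spanned by `x` and `y`. Every nonnegative `v` lies in the cone spanned by `(a, b)` and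
one of the unit vectors, so octahedrality at `(a, b)` gives `p ((a, b) + v) = 2` whenever
`v ≥ 0` and `p v = 1`.

Given `z` in the unit ball of `Z`, choose `(c, d) ≥ (‖z₁‖, ‖z₂‖)` with `p (c, d) = 1` and write
`z = (c • u, d • v)` with `u`, `v` in the unit balls. The continuous linear map
`(w, w') ↦ (c • w, d • w')` sends `Δ_{ε/2}(x) × Δ_{ε/2}(y)` into `Δ_ε(a • x, b • y)`, because
`‖a • x - c • w‖` and `‖b • y - d • w'‖` are `ε/2`-close to `a + c` and `b + d`, and
`p (a + c, b + d) = 2`. The closed convex hull of that product is the product of the unit balls,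
so `z` lies in the closed convex hull of `Δ_ε(a • x, b • y)`.
-/

open Set Metric

theorem Seminorm.apply_smul_add_smul_eq_add {E : Type*} [AddCommGroup E] [Module ℝ E]
    (p : Seminorm ℝ E) {x y : E} (hx : p x ≤ 1) (hy : p y ≤ 1) (hxy : p (x + y) = 2)
    {α β : ℝ} (hα : 0 ≤ α) (hβ : 0 ≤ β) : p (α • x + β • y) = α + β := by
  wlog hαβ : α ≤ β generalizing x y α β
  · rw [add_comm, this hy hx (by rwa [add_comm]) hβ hα (le_of_not_ge hαβ), add_comm]
  have hsmul : ∀ {t : ℝ} (z : E), 0 ≤ t → p (t • z) = t * p z := fun z ht => by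
    rw [map_smul_eq_mul, Real.norm_of_nonneg ht]
  have hupper : p (α • x + β • y) ≤ α + β :=
    calc p (α • x + β • y) ≤ α * p x + β * p y := by
          simpa only [hsmul _ hα, hsmul _ hβ] using map_add_le_add p (α • x) (β • y)
      _ ≤ α + β := by nlinarith
  have hlower : 2 * β ≤ p (α • x + β • y) + (β - α) := by
    calc 2 * β = p (β • (x + y)) := by rw [hsmul _ hβ, hxy, mul_comm]
      _ = p ((α • x + β • y) + (β - α) • x) := by congr 1; module
      _ ≤ p (α • x + β • y) + (β - α) * p x := by
          rw [← hsmul x (sub_nonneg.2 hαβ)]; exact map_add_le_add p _ _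
      _ ≤ p (α • x + β • y) + (β - α) := by nlinarith
  linarith

theorem exists_eq_smul_add_smul_fst {a b c d : ℝ} (ha : 0 ≤ a) (hb : 0 ≤ b) (hab : (a, b) ≠ 0)
    (hc : 0 ≤ c) (hd : 0 ≤ d) (had : a * d ≤ b * c) :
    ∃ α β : ℝ, 0 ≤ α ∧ 0 ≤ β ∧ (c, d) = α • (a, b) + β • ((1, 0) : ℝ × ℝ) := by
  rcases hb.eq_or_lt with rfl | hb
  · have ha : 0 < a := ha.lt_of_ne' fun ha => hab (by simp [ha])
    have hd0 : d = 0 := by nlinarith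
    exact ⟨0, c, le_rfl, hc, by simp [hd0]⟩
  · refine ⟨d / b, (b * c - a * d) / b, by positivity, div_nonneg (by linarith) hb.le, ?_⟩
    ext
    · simp only [Prod.fst_add, Prod.smul_fst, smul_eq_mul]; field_simp; ring
    · simp only [Prod.snd_add, Prod.smul_snd, smul_eq_mul]; field_simp; ring

theorem exists_eq_smul_add_smul_single {a b c d : ℝ} (ha : 0 ≤ a) (hb : 0 ≤ b)
    (hab : (a, b) ≠ 0) (hc : 0 ≤ c) (hd : 0 ≤ d) :
    ∃ α β : ℝ, ∃ e ∈ ({(1, 0), (0, 1)} : Set (ℝ × ℝ)),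
      0 ≤ α ∧ 0 ≤ β ∧ (c, d) = α • (a, b) + β • e := by
  rcases le_total (a * d) (b * c) with had | hbc
  · obtain ⟨α, β, hα, hβ, h⟩ := exists_eq_smul_add_smul_fst ha hb hab hc hd had
    exact ⟨α, β, (1, 0), by simp, hα, hβ, h⟩
  · have hba : (b, a) ≠ 0 := by simpa [and_comm] using hab
    obtain ⟨α, β, hα, hβ, h⟩ := exists_eq_smul_add_smul_fst hb ha hba hd hc (by linarith)
    refine ⟨α, β, (0, 1), by simp, hα, hβ, ?_⟩
    simpa using congrArg Prod.swap h

structure IsAbsNormalized (p : Seminorm ℝ (ℝ × ℝ)) : Prop where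
  abs_eq : ∀ s t : ℝ, p (s, t) = p (|s|, |t|)
  one_zero : p (1, 0) = 1
  zero_one : p (0, 1) = 1

namespace IsAbsNormalized

variable {p : Seminorm ℝ (ℝ × ℝ)}

theorem apply_mk_zero (hp : IsAbsNormalized p) (s : ℝ) : p (s, 0) = |s| := by
  simpa [hp.one_zero] using map_smul_eq_mul p s ((1, 0) : ℝ × ℝ)

theorem apply_zero_mk (hp : IsAbsNormalized p) (t : ℝ) : p (0, t) = |t| := by
  simpa [hp.zero_one] using map_smul_eq_mul p t ((0, 1) : ℝ × ℝ)

theorem apply_le_of_abs_le_fst (hp : IsAbsNormalized p) {s s' : ℝ} (t : ℝ) (h : |s| ≤ s') :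
    p (s, t) ≤ p (s', t) := by
  have hmem : (s, t) ∈ segment ℝ (-s', t) (s', t) := by
    rw [← Prod.image_mk_segment_left, segment_eq_Icc (by linarith [abs_nonneg s])]
    exact mem_image_of_mem _ (abs_le.mp h)
  have hneg : p (-s', t) = p (s', t) := by rw [hp.abs_eq, abs_neg, ← hp.abs_eq]
  simpa [hneg] using p.convexOn.le_on_segment (mem_univ _) (mem_univ _) hmem

theorem apply_le_of_abs_le_snd (hp : IsAbsNormalized p) (s : ℝ) {t t' : ℝ} (h : |t| ≤ t') :
    p (s, t) ≤ p (s, t') := by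
  have hmem : (s, t) ∈ segment ℝ (s, -t') (s, t') := by
    rw [← Prod.image_mk_segment_right, segment_eq_Icc (by linarith [abs_nonneg t])]
    exact mem_image_of_mem _ (abs_le.mp h)
  have hneg : p (s, -t') = p (s, t') := by rw [hp.abs_eq, abs_neg, ← hp.abs_eq]
  simpa [hneg] using p.convexOn.le_on_segment (mem_univ _) (mem_univ _) hmem

theorem apply_mono (hp : IsAbsNormalized p) {s s' t t' : ℝ} (hs : |s| ≤ s') (ht : |t| ≤ t') :
    p (s, t) ≤ p (s', t') :=
  (hp.apply_le_of_abs_le_fst t hs).trans (hp.apply_le_of_abs_le_snd s' ht)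

theorem abs_fst_le (hp : IsAbsNormalized p) (s t : ℝ) : |s| ≤ p (s, t) :=
  calc |s| = p (s, 0) := (hp.apply_mk_zero s).symm
    _ ≤ p (|s|, |t|) := hp.apply_mono le_rfl (by simp)
    _ = p (s, t) := (hp.abs_eq s t).symm

theorem abs_snd_le (hp : IsAbsNormalized p) (s t : ℝ) : |t| ≤ p (s, t) :=
  calc |t| = p (0, t) := (hp.apply_zero_mk t).symm
    _ ≤ p (|s|, |t|) := hp.apply_mono (by simp) le_rfl
    _ = p (s, t) := (hp.abs_eq s t).symm

theorem apply_le_abs_add_abs (hp : IsAbsNormalized p) (s t : ℝ) : p (s, t) ≤ |s| + |t| := by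
  simpa [hp.apply_mk_zero, hp.apply_zero_mk] using map_add_le_add p (s, 0) (0, t)

theorem exists_le_apply_eq_one (hp : IsAbsNormalized p) {s t : ℝ} (h : p (s, t) ≤ 1) :
    ∃ c d : ℝ, |s| ≤ c ∧ |t| ≤ d ∧ p (c, d) = 1 := by
  rcases (apply_nonneg p (s, t)).eq_or_lt with h0 | hpos
  · refine ⟨1, 0, ?_, ?_, hp.one_zero⟩
    · linarith [hp.abs_fst_le s t]
    · linarith [hp.abs_snd_le s t]
  · refine ⟨|s| / p (s, t), |t| / p (s, t), le_div_self (abs_nonneg s) hpos h,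
      le_div_self (abs_nonneg t) hpos h, ?_⟩
    have := map_smul_eq_mul p (p (s, t))⁻¹ (|s|, |t|)
    rw [← hp.abs_eq, Real.norm_of_nonneg (by positivity), inv_mul_cancel₀ hpos.ne'] at this
    simpa [div_eq_inv_mul] using this

theorem apply_add_eq_two (hp : IsAbsNormalized p) {a b c d : ℝ} (ha : 0 ≤ a) (hb : 0 ≤ b)
    (hab : p (a, b) = 1) (h₁ : p ((a, b) + (1, 0)) = 2) (h₂ : p ((a, b) + (0, 1)) = 2)
    (hc : 0 ≤ c) (hd : 0 ≤ d) (hcd : p (c, d) = 1) : p ((a, b) + (c, d)) = 2 := by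
  have hab₀ : (a, b) ≠ 0 := fun h => by simp [h] at hab
  obtain ⟨α, β, e, he, hα, hβ, hcd_eq⟩ := exists_eq_smul_add_smul_single ha hb hab₀ hc hd
  obtain ⟨hpe, hsum⟩ : p e ≤ 1 ∧ p ((a, b) + e) = 2 := by
    rcases he with rfl | rfl
    exacts [⟨hp.one_zero.le, h₁⟩, ⟨hp.zero_one.le, h₂⟩]
  have hcone {α β : ℝ} (hα : 0 ≤ α) (hβ : 0 ≤ β) :=
    p.apply_smul_add_smul_eq_add hab.le hpe hsum hα hβ
  rw [hcd_eq, hcone hα hβ] at hcd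
  calc p ((a, b) + (c, d)) = p ((1 + α) • (a, b) + β • e) := by rw [hcd_eq]; congr 1; module
    _ = 2 := by rw [hcone (by linarith) hβ]; linarith

end IsAbsNormalized

section Daugavet

variable {E : Type*} [NormedAddCommGroup E] [NormedSpace ℝ E]

/-- `Δ_ε(z)`: `z` is a Daugavet point iff each `Δ_ε(z)`, `ε > 0`, has the unit ball as closed
convex hull. -/
def deltaSet (z : E) (ε : ℝ) : Set E := {w | ‖w‖ ≤ 1 ∧ 2 - ε ≤ ‖z - w‖}

theorem closure_convexHull_deltaSet_subset (z : E) (ε : ℝ) :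
    closure (convexHull ℝ (deltaSet z ε)) ⊆ closedBall 0 1 :=
  closure_minimal (convexHull_min (fun _ hw => mem_closedBall_zero_iff.2 hw.1)
    (convex_closedBall 0 1)) isClosed_closedBall

theorem exists_norm_le_one_smul_eq {u : E} {c : ℝ} (h : ‖u‖ ≤ c) :
    ∃ w : E, ‖w‖ ≤ 1 ∧ c • w = u := by
  rcases ((norm_nonneg u).trans h).eq_or_lt with rfl | hc
  · exact ⟨0, by simp, by simp [norm_le_zero_iff.1 h]⟩
  · refine ⟨c⁻¹ • u, ?_, smul_inv_smul₀ hc.ne' u⟩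
    rw [norm_smul, Real.norm_of_nonneg (inv_nonneg.2 hc.le)]
    exact inv_mul_le_one_of_le₀ h hc.le

theorem add_sub_le_norm_smul_sub_smul {x w : E} (hx : ‖x‖ ≤ 1) (hw : ‖w‖ ≤ 1) {δ : ℝ}
    (hδ : 0 ≤ δ) (hxw : 2 - δ ≤ ‖x - w‖) {a c : ℝ} (ha : 0 ≤ a) (ha₁ : a ≤ 1) (hc : 0 ≤ c)
    (hc₁ : c ≤ 1) : a + c - δ ≤ ‖a • x - c • w‖ := by
  wlog hac : a ≤ c generalizing x w a c
  · have := this hw hx (by rwa [norm_sub_rev]) hc hc₁ ha ha₁ (le_of_not_ge hac)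
    rwa [norm_sub_rev, add_comm]
  calc a + c - δ ≤ c * (2 - δ) - (c - a) * 1 := by nlinarith
    _ ≤ c * ‖x - w‖ - (c - a) * ‖x‖ := by gcongr
    _ = ‖c • (x - w)‖ - ‖(c - a) • x‖ := by
        rw [norm_smul, norm_smul, Real.norm_of_nonneg hc, Real.norm_of_nonneg (by linarith)]
    _ ≤ ‖c • (x - w) - (c - a) • x‖ := norm_sub_norm_le _ _
    _ = ‖a • x - c • w‖ := by congr 1; module

theorem abs_norm_smul_sub_smul_sub_add_le {x w : E} (hx : ‖x‖ ≤ 1) (hw : ‖w‖ ≤ 1) {δ : ℝ}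
    (hδ : 0 ≤ δ) (hxw : 2 - δ ≤ ‖x - w‖) {a c : ℝ} (ha : 0 ≤ a) (ha₁ : a ≤ 1) (hc : 0 ≤ c)
    (hc₁ : c ≤ 1) : |‖a • x - c • w‖ - (a + c)| ≤ δ := by
  have hupper : ‖a • x - c • w‖ ≤ a + c :=
    calc ‖a • x - c • w‖ ≤ ‖a • x‖ + ‖c • w‖ := norm_sub_le _ _
      _ = a * ‖x‖ + c * ‖w‖ := by
          rw [norm_smul, norm_smul, Real.norm_of_nonneg ha, Real.norm_of_nonneg hc]
      _ ≤ a + c := by nlinarith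
  have hlower := add_sub_le_norm_smul_sub_smul hx hw hδ hxw ha ha₁ hc hc₁
  rw [abs_le]
  constructor <;> linarith

end Daugavet

theorem LinearMap.image_closure_convexHull_subset {E F : Type*} [AddCommGroup E] [Module ℝ E]
    [TopologicalSpace E] [AddCommGroup F] [Module ℝ F] [TopologicalSpace F] (f : E →ₗ[ℝ] F)
    (hf : Continuous f) (s : Set E) :
    f '' closure (convexHull ℝ s) ⊆ closure (convexHull ℝ (f '' s)) := by
  rw [← f.image_convexHull]
  exact image_closure_subset_closure_image hf

section AbsoluteSum

variable {X Y Z : Type*} [NormedAddCommGroup X] [NormedSpace ℝ X]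
  [NormedAddCommGroup Y] [NormedSpace ℝ Y] [NormedAddCommGroup Z] [NormedSpace ℝ Z]
  {p : Seminorm ℝ (ℝ × ℝ)} {e : Z ≃ₗ[ℝ] X × Y}

theorem norm_symm_apply (he : ∀ z, ‖z‖ = p (‖(e z).1‖, ‖(e z).2‖)) (w : X × Y) :
    ‖e.symm w‖ = p (‖w.1‖, ‖w.2‖) := by
  rw [he, e.apply_symm_apply]

theorem continuous_symm (hp : IsAbsNormalized p) (he : ∀ z, ‖z‖ = p (‖(e z).1‖, ‖(e z).2‖)) :
    Continuous e.symm :=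
  (e.symm.toLinearMap.mkContinuous 2 fun w => by
    calc ‖e.symm w‖ = p (‖w.1‖, ‖w.2‖) := norm_symm_apply he w
      _ ≤ ‖w.1‖ + ‖w.2‖ := by simpa using hp.apply_le_abs_add_abs ‖w.1‖ ‖w.2‖
      _ ≤ 2 * ‖w‖ := by linarith [norm_fst_le w, norm_snd_le w]).continuous

theorem mapsTo_deltaSet (hp : IsAbsNormalized p) (he : ∀ z, ‖z‖ = p (‖(e z).1‖, ‖(e z).2‖))
    {x : X} {y : Y} (hx : ‖x‖ ≤ 1) (hy : ‖y‖ ≤ 1) {a b c d : ℝ} (ha : 0 ≤ a) (hb : 0 ≤ b)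
    (hc : 0 ≤ c) (hd : 0 ≤ d) (hab : p (a, b) = 1) (hcd : p (c, d) = 1)
    (hsum : p (a + c, b + d) = 2) {δ : ℝ} (hδ : 0 ≤ δ) :
    MapsTo (fun w : X × Y => e.symm (c • w.1, d • w.2)) (deltaSet x δ ×ˢ deltaSet y δ)
      (deltaSet (e.symm (a • x, b • y)) (2 * δ)) := by
  rintro ⟨w, w'⟩ ⟨⟨hw, hxw⟩, hw', hyw⟩
  have ha₁ : a ≤ 1 := by simpa [abs_of_nonneg ha, hab] using hp.abs_fst_le a b
  have hb₁ : b ≤ 1 := by simpa [abs_of_nonneg hb, hab] using hp.abs_snd_le a b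
  have hc₁ : c ≤ 1 := by simpa [abs_of_nonneg hc, hcd] using hp.abs_fst_le c d
  have hd₁ : d ≤ 1 := by simpa [abs_of_nonneg hd, hcd] using hp.abs_snd_le c d
  refine ⟨?_, ?_⟩
  · rw [norm_symm_apply he, ← hcd]
    refine hp.apply_mono ?_ ?_ <;>
      simpa [norm_smul, abs_of_nonneg hc, abs_of_nonneg hd] using mul_le_of_le_one_right ‹_› ‹_›
  · set s := ‖a • x - c • w‖
    set t := ‖b • y - d • w'‖
    have hs := abs_norm_smul_sub_smul_sub_add_le hx hw hδ hxw ha ha₁ hc hc₁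
    have ht := abs_norm_smul_sub_smul_sub_add_le hy hw' hδ hyw hb hb₁ hd hd₁
    have hsplit := map_add_le_add p (s, t) (a + c - s, b + d - t)
    have hsmall := hp.apply_le_abs_add_abs (a + c - s) (b + d - t)
    rw [abs_sub_comm] at hs ht
    simp only [Prod.mk_add_mk, add_sub_cancel, hsum] at hsplit
    rw [← map_sub, norm_symm_apply he]
    change 2 - 2 * δ ≤ p (s, t)
    linarith

end AbsoluteSum

theorem stmt_13_general {X Y Z : Type*}
    [NormedAddCommGroup X] [NormedSpace ℝ X]
    [NormedAddCommGroup Y] [NormedSpace ℝ Y]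
    [NormedAddCommGroup Z] [NormedSpace ℝ Z]
    (N : ℝ × ℝ → ℝ)
    -- `N` is a norm on `ℝ²`:
    (Ntri : ∀ u v : ℝ × ℝ, N (u + v) ≤ N u + N v)
    (Nhom : ∀ (t : ℝ) (u : ℝ × ℝ), N (t • u) = |t| * N u)
    -- `N` is absolute and normalized:
    (Nabs : ∀ s t : ℝ, N (s, t) = N (|s|, |t|))
    (Nnorm₁ : N (1, 0) = 1) (Nnorm₂ : N (0, 1) = 1)
    -- `Z = X ⊕_N Y`:
    (e : Z ≃ₗ[ℝ] X × Y)
    (he : ∀ z : Z, ‖z‖ = N (‖(e z).1‖, ‖(e z).2‖))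
    -- `N` is positively octahedral, witnessed by `(a, b)`:
    (a b : ℝ) (ha : 0 ≤ a) (hb : 0 ≤ b) (hab : N (a, b) = 1)
    (hoct₁ : N ((a, b) + (0, 1)) = 2) (hoct₂ : N ((a, b) + (1, 0)) = 2)
    -- `x` and `y` are Daugavet points:
    (x : X) (hx : ‖x‖ = 1)
    (hxD : ∀ ε > (0 : ℝ),
      Metric.closedBall (0 : X) 1 =
        closure (convexHull ℝ {w : X | ‖w‖ ≤ 1 ∧ 2 - ε ≤ ‖x - w‖}))
    (y : Y) (hy : ‖y‖ = 1)
    (hyD : ∀ ε > (0 : ℝ),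
      Metric.closedBall (0 : Y) 1 =
        closure (convexHull ℝ {w : Y | ‖w‖ ≤ 1 ∧ 2 - ε ≤ ‖y - w‖})) :
    ‖e.symm (a • x, b • y)‖ = 1 ∧
    ∀ ε > (0 : ℝ),
      Metric.closedBall (0 : Z) 1 =
        closure (convexHull ℝ
          {w : Z | ‖w‖ ≤ 1 ∧ 2 - ε ≤ ‖e.symm (a • x, b • y) - w‖}) := by
  let p : Seminorm ℝ (ℝ × ℝ) := Seminorm.of N Ntri fun t u => by rw [Real.norm_eq_abs, Nhom]
  have hp : IsAbsNormalized p := ⟨Nabs, Nnorm₁, Nnorm₂⟩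
  have hpe : ∀ z, ‖z‖ = p (‖(e z).1‖, ‖(e z).2‖) := he
  refine ⟨by simpa [norm_symm_apply hpe, norm_smul, abs_of_nonneg ha, abs_of_nonneg hb, hx, hy],
    fun ε hε => (closure_convexHull_deltaSet_subset _ ε).antisymm' fun z hz => ?_⟩
  obtain ⟨c, d, hc, hd, hcd⟩ :=
    hp.exists_le_apply_eq_one (by rwa [← hpe, ← mem_closedBall_zero_iff])
  have hc₀ : 0 ≤ c := (abs_nonneg _).trans hc
  have hd₀ : 0 ≤ d := (abs_nonneg _).trans hd
  obtain ⟨u, hu, hcu⟩ := exists_norm_le_one_smul_eq ((le_abs_self _).trans hc)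
  obtain ⟨v, hv, hdv⟩ := exists_norm_le_one_smul_eq ((le_abs_self _).trans hd)
  let L : X × Y →ₗ[ℝ] Z := e.symm.toLinearMap ∘ₗ (c • LinearMap.id).prodMap (d • LinearMap.id)
  have hL : Continuous L :=
    (continuous_symm hp hpe).comp (show Continuous fun w : X × Y => (c • w.1, d • w.2) by fun_prop)
  have hzL : z = L (u, v) := by simp [L, hcu, hdv]
  have huv : (u, v) ∈ closure (convexHull ℝ (deltaSet x (ε / 2) ×ˢ deltaSet y (ε / 2))) := by
    rw [convexHull_prod, closure_prod_eq, deltaSet, deltaSet, ← hxD _ (by positivity),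
      ← hyD _ (by positivity)]
    exact ⟨mem_closedBall_zero_iff.2 hu, mem_closedBall_zero_iff.2 hv⟩
  have hsum : p (a + c, b + d) = 2 := by
    simpa using hp.apply_add_eq_two ha hb hab hoct₂ hoct₁ hc₀ hd₀ hcd
  have hmaps :=
    mapsTo_deltaSet hp hpe hx.le hy.le ha hb hc₀ hd₀ hab hcd hsum (half_pos hε).le
  rw [mul_div_cancel₀ ε two_ne_zero] at hmaps
  rw [hzL]
  exact closure_mono (convexHull_mono hmaps.image_subset)
    (L.image_closure_convexHull_subset hL _ (mem_image_of_mem L huv))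

/-- If `N` is an absolute normalized norm on `ℝ²` that is positively octahedral
(witnessed by `(a, b)`), `x` is a Daugavet point of `X` and `y` is a Daugavet
point of `Y`, then `(a•x, b•y)` is a Daugavet point of `Z = X ⊕_N Y`.
Here `Z` is any Banach space linearly identified with `X × Y` whose norm is
`‖(x, y)‖ = N(‖x‖, ‖y‖)`. -/
theorem stmt_13 {X Y Z : Type*}
    [NormedAddCommGroup X] [NormedSpace ℝ X] [CompleteSpace X]
    [NormedAddCommGroup Y] [NormedSpace ℝ Y] [CompleteSpace Y]
    [NormedAddCommGroup Z] [NormedSpace ℝ Z] [CompleteSpace Z]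
    (N : ℝ × ℝ → ℝ)
    -- `N` is a norm on `ℝ²`:
    (Ntri : ∀ u v : ℝ × ℝ, N (u + v) ≤ N u + N v)
    (Nhom : ∀ (t : ℝ) (u : ℝ × ℝ), N (t • u) = |t| * N u)
    (Ndef : ∀ u : ℝ × ℝ, N u = 0 → u = 0)
    -- `N` is absolute and normalized:
    (Nabs : ∀ s t : ℝ, N (s, t) = N (|s|, |t|))
    (Nnorm₁ : N (1, 0) = 1) (Nnorm₂ : N (0, 1) = 1)
    -- `Z = X ⊕_N Y`:
    (e : Z ≃ₗ[ℝ] X × Y)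
    (he : ∀ z : Z, ‖z‖ = N (‖(e z).1‖, ‖(e z).2‖))
    -- `N` is positively octahedral, witnessed by `(a, b)`:
    (a b : ℝ) (ha : 0 ≤ a) (hb : 0 ≤ b) (hab : N (a, b) = 1)
    (hoct₁ : N ((a, b) + (0, 1)) = 2) (hoct₂ : N ((a, b) + (1, 0)) = 2)
    -- `x` and `y` are Daugavet points:
    (x : X) (hx : ‖x‖ = 1)
    (hxD : ∀ ε > (0 : ℝ),
      Metric.closedBall (0 : X) 1 =
        closure (convexHull ℝ {w : X | ‖w‖ ≤ 1 ∧ 2 - ε ≤ ‖x - w‖}))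
    (y : Y) (hy : ‖y‖ = 1)
    (hyD : ∀ ε > (0 : ℝ),
      Metric.closedBall (0 : Y) 1 =
        closure (convexHull ℝ {w : Y | ‖w‖ ≤ 1 ∧ 2 - ε ≤ ‖y - w‖})) :
    ‖e.symm (a • x, b • y)‖ = 1 ∧
    ∀ ε > (0 : ℝ),
      Metric.closedBall (0 : Z) 1 =
        closure (convexHull ℝ
          {w : Z | ‖w‖ ≤ 1 ∧ 2 - ε ≤ ‖e.symm (a • x, b • y) - w‖}) :=
  stmt_13_general N Ntri Nhom Nabs Nnorm₁ Nnorm₂ e he a b ha hb hab hoct₁ hoct₂ x hx hxD y hy hyD
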